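/- arXiv:1003.4595 — 3 statements merged into one kernel-verified Lean document; each statement's English description precedes it below -/
import Mathlib

section
/- Let μ be a fuzzy set of an MTL-algebra L. Then for every t ∈ (0.5, 1] the q-level set F_q(t) = {x ∈ L : μ(x) + t > 1} is either empty or a filter of L if and only if μ is an (∈,∈∨q)-fuzzy filter of L. -/
/-- An MTL-algebra: a bounded lattice with `⊥ ≠ ⊤`, a product `odot` and residuum `rimp`,
where `odot` is associative, commutative and monotone in each argument, `⊤` is a unit,
the Galois correspondence holds and prelinearity holds. -/
class MTL (L : Type*) extends Lattice L, BoundedOrder L where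
  odot : L → L → L
  rimp : L → L → L
  bot_ne_top : (⊥ : L) ≠ ⊤
  odot_assoc : ∀ x y z : L, odot (odot x y) z = odot x (odot y z)
  odot_comm : ∀ x y : L, odot x y = odot y x
  odot_mono_left : ∀ x y z : L, x ≤ y → odot x z ≤ odot y z
  odot_mono_right : ∀ x y z : L, x ≤ y → odot z x ≤ odot z y
  odot_top : ∀ x : L, odot x ⊤ = x
  galois : ∀ x y z : L, odot x y ≤ z ↔ x ≤ rimp y z
  prelinear : ∀ x y : L, rimp x y ⊔ rimp y x = ⊤

open MTL

variable {L : Type*} [MTL L]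

/-- A subset `A` is a filter: `1 ∈ A` and it is closed under modus ponens. -/
def IsFilter' (A : Set L) : Prop :=
  (⊤ : L) ∈ A ∧ ∀ x y : L, x ∈ A → rimp x y ∈ A → y ∈ A

/-- An (∈,∈∨q)-fuzzy filter: `μ(1) ≥ min(μ(x), 0.5)` and
`μ(y) ≥ min(μ(x → y), μ(x), 0.5)`. -/
def IsEIVQFuzzyFilter (μ : L → ℝ) : Prop :=
  (∀ x : L, μ ⊤ ≥ min (μ x) (1/2)) ∧
    ∀ x y : L, μ y ≥ min (min (μ (rimp x y)) (μ x)) (1/2)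

/-!
`x ∈ F_q(t)` means `μ x > 1 - t`, and as `t` ranges over `(1/2, 1]` the threshold `1 - t` ranges
over `[0, 1/2)`. Hence, for `a ≥ 0`, `min b (1/2) ≤ a` holds iff every such threshold exceeded by
`b` is also exceeded by `a` (test `t = 1 - a`). Applied to the two inequalities defining an
(∈,∈∨q)-fuzzy filter, this turns them into the two filter conditions for all q-level sets at once.
-/

theorem eq_empty_or_isFilter'_iff {A : Set L} :
    A = ∅ ∨ IsFilter' A ↔
      (∀ x, x ∈ A → (⊤ : L) ∈ A) ∧ ∀ x y, x ∈ A → rimp x y ∈ A → y ∈ A := by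
  rcases A.eq_empty_or_nonempty with rfl | ⟨x, hx⟩
  · simp
  · simp only [IsFilter', Set.nonempty_iff_ne_empty.mp ⟨x, hx⟩, false_or]
    exact ⟨fun h => ⟨fun _ _ => h.1, h.2⟩, fun h => ⟨h.1 x hx, h.2⟩⟩

theorem min_half_le_iff_forall_threshold {a b : ℝ} (ha : 0 ≤ a) :
    min b (1/2) ≤ a ↔ ∀ t : ℝ, 1/2 < t → t ≤ 1 → 1 < b + t → 1 < a + t := by
  constructor
  · intro h t ht _ hb
    have : 1 - t < min b (1/2) := lt_min (by linarith) (by linarith)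
    linarith
  · intro h
    by_contra! hlt
    have hab : a < b := hlt.trans_le (min_le_left _ _)
    have := h (1 - a) (by linarith [min_le_right b (1/2)]) (by linarith) (by linarith)
    linarith

theorem stmt_5_general (μ : L → ℝ) (hμ0 : ∀ x : L, 0 ≤ μ x) :
    (∀ t : ℝ, 1/2 < t → t ≤ 1 → ({x : L | 1 < μ x + t} = ∅ ∨ IsFilter' {x : L | 1 < μ x + t})) ↔ IsEIVQFuzzyFilter μ := by
  simp only [eq_empty_or_isFilter'_iff, IsEIVQFuzzyFilter, ge_iff_le,
    min_half_le_iff_forall_threshold (hμ0 _), Set.mem_ofPred_eq, ← min_add_add_right, lt_min_iff]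
  exact ⟨fun h => ⟨fun x t h₁ h₂ => (h t h₁ h₂).1 x,
      fun x y t h₁ h₂ hxy => (h t h₁ h₂).2 x y hxy.2 hxy.1⟩,
    fun h t h₁ h₂ => ⟨fun x => h.1 x t h₁ h₂, fun x y hx hxy => h.2 x y t h₁ h₂ ⟨hxy, hx⟩⟩⟩

theorem stmt_5 (μ : L → ℝ) (hμ0 : ∀ x : L, 0 ≤ μ x) (hμ1 : ∀ x : L, μ x ≤ 1) :
    (∀ t : ℝ, 1/2 < t → t ≤ 1 → ({x : L | 1 < μ x + t} = ∅ ∨ IsFilter' {x : L | 1 < μ x + t})) ↔ IsEIVQFuzzyFilter μ :=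
  stmt_5_general μ hμ0
end

section
/- Let μ be a fuzzy set of an MTL-algebra L. Then for every t ∈ (0.5, 1] the q-level set F_q(t) = {x ∈ L : μ(x) + t > 1} is either empty or a Boolean filter of L if and only if μ is an (∈,∈∨q)-fuzzy Boolean filter of L. -/
open MTL

variable {L : Type*} [MTL L]

/-- A Boolean filter: a filter containing `x ∨ x'` for all `x`, where `x' = x → 0`. -/
def IsBooleanFilter (A : Set L) : Prop :=
  IsFilter' A ∧ ∀ x : L, x ⊔ rimp x ⊥ ∈ A

/-- An (∈,∈∨q)-fuzzy Boolean filter: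
`μ(x → z) ≥ min(μ(x → (z' → y)), μ(y → z), 0.5)`. -/
def IsEIVQFuzzyBooleanFilter (μ : L → ℝ) : Prop :=
  IsEIVQFuzzyFilter μ ∧
    ∀ x y z : L, μ (rimp x z) ≥
      min (min (μ (rimp x (rimp (rimp z ⊥) y))) (μ (rimp y z))) (1/2)

namespace MTL

lemma rimp_eq_top_of_le {a b : L} (h : a ≤ b) : rimp a b = ⊤ :=
  top_le_iff.mp ((galois ⊤ a b).mp (by rwa [odot_comm, odot_top]))

lemma odot_rimp_le (a b : L) : odot (rimp a b) a ≤ b :=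
  (galois _ _ _).mpr le_rfl

lemma top_rimp (a : L) : rimp ⊤ a = a :=
  le_antisymm (by simpa [odot_top] using odot_rimp_le ⊤ a) ((galois a ⊤ a).mp (odot_top a).le)

lemma rimp_anti_left {a b : L} (c : L) (h : a ≤ b) : rimp b c ≤ rimp a c :=
  (galois _ _ _).mp ((odot_mono_right _ _ _ h).trans (odot_rimp_le b c))

lemma le_rimp_of_le {a b : L} (c : L) (h : a ≤ b) : a ≤ rimp c b :=
  (galois _ _ _).mp ((odot_mono_right _ _ _ le_top).trans ((odot_top a).trans_le h))

lemma le_rimp_rimp (a b : L) : a ≤ rimp (rimp a b) b :=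
  (galois _ _ _).mp (by rw [odot_comm]; exact odot_rimp_le a b)

lemma rimp_odot_rimp_le (a b c : L) : odot (rimp a b) (rimp b c) ≤ rimp a c := by
  refine (galois _ _ _).mp ?_
  calc odot (odot (rimp a b) (rimp b c)) a = odot (rimp b c) (odot (rimp a b) a) := by
        rw [odot_comm (rimp a b), odot_assoc]
    _ ≤ odot (rimp b c) b := odot_mono_right _ _ _ (odot_rimp_le a b)
    _ ≤ c := odot_rimp_le b c

lemma rimp_le_rimp_rimp (a b c : L) : rimp b c ≤ rimp (rimp a b) (rimp a c) :=
  (galois _ _ _).mp (by rw [odot_comm]; exact rimp_odot_rimp_le a b c)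

end MTL

open MTL

namespace IsFilter'

variable {A : Set L}

lemma mem_of_le (hA : IsFilter' A) {a b : L} (ha : a ∈ A) (h : a ≤ b) : b ∈ A :=
  hA.2 a b ha (by rw [rimp_eq_top_of_le h]; exact hA.1)

lemma mem_of_odot_le (hA : IsFilter' A) {a b c : L} (ha : a ∈ A) (hb : b ∈ A)
    (h : odot a b ≤ c) : c ∈ A :=
  hA.2 b c hb (hA.mem_of_le ha ((galois a b c).mp h))

end IsFilter'

lemma IsBooleanFilter.rimp_mem {A : Set L} (hA : IsBooleanFilter A) {x y z : L}
    (hxy : rimp x (rimp (rimp z ⊥) y) ∈ A) (hyz : rimp y z ∈ A) : rimp x z ∈ A := by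
  set z' := rimp z ⊥
  have hxz'z : rimp x (rimp z' z) ∈ A :=
    hA.1.mem_of_odot_le hxy hyz <| (odot_mono_right _ _ _ (rimp_le_rimp_rimp z' y z)).trans
      (rimp_odot_rimp_le _ _ _)
  -- `z ⊔ z' ∈ A` is where Booleanness enters: it eliminates the hypothesis `z'`.
  have hz'zz : rimp (rimp z' z) z ∈ A :=
    hA.1.mem_of_le (hA.2 z) (sup_le (le_rimp_of_le _ le_rfl) (le_rimp_rimp z' z))
  exact hA.1.mem_of_odot_le hxz'z hz'zz (rimp_odot_rimp_le _ _ _)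

structure ClosedUnderBooleanFilterRules (A : Set L) : Prop where
  top_mem : ∀ x ∈ A, ⊤ ∈ A
  mem_of_rimp_mem : ∀ x y, rimp x y ∈ A → x ∈ A → y ∈ A
  rimp_mem : ∀ x y z, rimp x (rimp (rimp z ⊥) y) ∈ A → rimp y z ∈ A → rimp x z ∈ A

lemma eq_empty_or_isBooleanFilter_iff {A : Set L} :
    A = ∅ ∨ IsBooleanFilter A ↔ ClosedUnderBooleanFilterRules A := by
  constructor
  · rintro (rfl | hA)
    · exact ⟨by simp, by simp, by simp⟩
    · exact ⟨fun _ _ => hA.1.1, fun x y hxy hx => hA.1.2 x y hx hxy,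
        fun _ _ _ => hA.rimp_mem⟩
  · intro hA
    rcases A.eq_empty_or_nonempty with hempty | ⟨a, ha⟩
    · exact Or.inl hempty
    have htop : ⊤ ∈ A := hA.top_mem a ha
    refine Or.inr ⟨⟨htop, fun x y hx hxy => hA.mem_of_rimp_mem x y hxy hx⟩, fun x => ?_⟩
    -- The third rule at `x := ⊤`, `y := z'`, `z := x ⊔ x'`, using `z' ≤ x' ≤ z`.
    set z := x ⊔ rimp x ⊥
    have hz'z : rimp z ⊥ ≤ z := (rimp_anti_left ⊥ le_sup_left).trans le_sup_right
    have := hA.rimp_mem ⊤ (rimp z ⊥) z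
    rw [top_rimp, top_rimp, rimp_eq_top_of_le le_rfl, rimp_eq_top_of_le hz'z] at this
    exact this htop htop

/-- The q-level set `F_q(t)` of a fuzzy set `μ`. -/
def qLevelSet (μ : L → ℝ) (t : ℝ) : Set L := {x | 1 < μ x + t}

lemma one_lt_min_add_iff {a b t : ℝ} : 1 < min a b + t ↔ 1 < a + t ∧ 1 < b + t := by
  rw [← min_add_add_right, lt_min_iff]

lemma min_half_le_iff_forall_one_lt_add {a c : ℝ} (hc : 0 ≤ c) :
    min a (1/2) ≤ c ↔ ∀ t : ℝ, 1/2 < t → t ≤ 1 → 1 < a + t → 1 < c + t := by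
  constructor
  · intro h t ht _ hat
    rcases min_cases a (1/2 : ℝ) with ⟨hmin, _⟩ | ⟨hmin, _⟩ <;> rw [hmin] at h <;> linarith
  · intro h
    by_contra! hlt
    have := h (1 - c) (by linarith [min_le_right a (1/2 : ℝ)]) (by linarith)
      (by linarith [min_le_left a (1/2 : ℝ)])
    linarith

lemma isEIVQFuzzyBooleanFilter_iff_forall_qLevelSet {μ : L → ℝ} (hμ0 : ∀ x, 0 ≤ μ x) :
    IsEIVQFuzzyBooleanFilter μ ↔
      ∀ t : ℝ, 1/2 < t → t ≤ 1 → ClosedUnderBooleanFilterRules (qLevelSet μ t) := by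
  simp only [IsEIVQFuzzyBooleanFilter, IsEIVQFuzzyFilter, ge_iff_le,
    min_half_le_iff_forall_one_lt_add (hμ0 _), one_lt_min_add_iff]
  constructor
  · rintro ⟨⟨htop, hmp⟩, hrimp⟩ t ht1 ht2
    exact ⟨fun x hx => htop x t ht1 ht2 hx, fun x y hxy hx => hmp x y t ht1 ht2 ⟨hxy, hx⟩,
      fun x y z hxy hyz => hrimp x y z t ht1 ht2 ⟨hxy, hyz⟩⟩
  · intro h
    exact ⟨⟨fun x t ht1 ht2 hx => (h t ht1 ht2).top_mem x hx,
      fun x y t ht1 ht2 hxy => (h t ht1 ht2).mem_of_rimp_mem x y hxy.1 hxy.2⟩,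
      fun x y z t ht1 ht2 hxyz => (h t ht1 ht2).rimp_mem x y z hxyz.1 hxyz.2⟩

theorem stmt_12_general (μ : L → ℝ) (hμ0 : ∀ x : L, 0 ≤ μ x) :
    (∀ t : ℝ, 1/2 < t → t ≤ 1 → ({x : L | 1 < μ x + t} = ∅ ∨ IsBooleanFilter {x : L | 1 < μ x + t})) ↔ IsEIVQFuzzyBooleanFilter μ := by
  rw [isEIVQFuzzyBooleanFilter_iff_forall_qLevelSet hμ0]
  exact forall₃_congr fun t _ _ => eq_empty_or_isBooleanFilter_iff

theorem stmt_12 (μ : L → ℝ) (hμ0 : ∀ x : L, 0 ≤ μ x) (hμ1 : ∀ x : L, μ x ≤ 1) :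
    (∀ t : ℝ, 1/2 < t → t ≤ 1 → ({x : L | 1 < μ x + t} = ∅ ∨ IsBooleanFilter {x : L | 1 < μ x + t})) ↔ IsEIVQFuzzyBooleanFilter μ :=
  stmt_12_general μ hμ0
end

section
/- Let μ be a fuzzy set of an MTL-algebra L. Then μ is an (∈,∈∨q)-fuzzy MV-filter of L if and only if for every t ∈ (0, 0.5] the ∈-level set F(t) = {x ∈ L : μ(x) ≥ t} is either empty or an MV-filter of L. -/
open MTL

variable {L : Type*} [MTL L]

/-- An MV-filter: a filter such that `x → y ∈ A` implies `((y → x) → x) → y ∈ A`. -/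
def IsMVFilter (A : Set L) : Prop :=
  IsFilter' A ∧ ∀ x y : L, rimp x y ∈ A → rimp (rimp (rimp y x) x) y ∈ A

/-- An (∈,∈∨q)-fuzzy MV-filter: `μ(((y → x) → x) → y) ≥ min(μ(x → y), 0.5)`. -/
def IsEIVQFuzzyMVFilter (μ : L → ℝ) : Prop :=
  IsEIVQFuzzyFilter μ ∧
    ∀ x y : L, μ (rimp (rimp (rimp y x) x) y) ≥ min (μ (rimp x y)) (1/2)

/-! The level sets `F(t)` with `0 < t ≤ 1/2` see exactly the part `min (μ x) (1/2)` of `μ` that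
the (∈,∈∨q)-conditions constrain: an inequality `min a (1/2) ≤ b` with `b ≥ 0` holds as soon as
every such `t` below `a` is also below `b`. Hence each fuzzy condition is equivalent to the
corresponding closure property of all nonempty level sets. -/

theorem min_le_of_forall_pos_le_imp_le {a b c : ℝ} (hb : 0 ≤ b)
    (h : ∀ t : ℝ, 0 < t → t ≤ c → t ≤ a → t ≤ b) : min a c ≤ b := by
  rcases le_or_gt (min a c) 0 with hle | hpos
  · exact hle.trans hb
  · exact h _ hpos (min_le_right a c) (min_le_left a c)

section LevelSets

variable {μ : L → ℝ} {t : ℝ}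

theorem IsEIVQFuzzyFilter.isFilter'_levelSet (hμ : IsEIVQFuzzyFilter μ) (ht : t ≤ 1/2)
    (hne : {x : L | t ≤ μ x}.Nonempty) : IsFilter' {x : L | t ≤ μ x} := by
  obtain ⟨x₀, hx₀⟩ := hne
  exact ⟨(le_min hx₀ ht).trans (hμ.1 x₀),
    fun x y hx hxy => (le_min (le_min hxy hx) ht).trans (hμ.2 x y)⟩

theorem IsEIVQFuzzyMVFilter.isMVFilter_levelSet (hμ : IsEIVQFuzzyMVFilter μ) (ht : t ≤ 1/2)
    (hne : {x : L | t ≤ μ x}.Nonempty) : IsMVFilter {x : L | t ≤ μ x} :=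
  ⟨hμ.1.isFilter'_levelSet ht hne, fun x y hxy => (le_min hxy ht).trans (hμ.2 x y)⟩

theorem isEIVQFuzzyMVFilter_of_levelSets (hμ0 : ∀ x : L, 0 ≤ μ x)
    (h : ∀ t : ℝ, 0 < t → t ≤ 1/2 →
      ({x : L | t ≤ μ x} = ∅ ∨ IsMVFilter {x : L | t ≤ μ x})) :
    IsEIVQFuzzyMVFilter μ := by
  have hMV : ∀ (t : ℝ) (x : L), 0 < t → t ≤ 1/2 → t ≤ μ x → IsMVFilter {x : L | t ≤ μ x} :=
    fun t x ht ht' hx =>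
      (h t ht ht').resolve_left (Set.nonempty_of_mem (s := {x | t ≤ μ x}) hx).ne_empty
  refine ⟨⟨fun x => ?_, fun x y => ?_⟩, fun x y => ?_⟩
  · exact min_le_of_forall_pos_le_imp_le (hμ0 ⊤) fun t ht ht' hx =>
      (hMV t x ht ht' hx).1.1
  · refine min_le_of_forall_pos_le_imp_le (hμ0 y) fun t ht ht' htxy => ?_
    obtain ⟨hxy, hx⟩ := le_min_iff.1 htxy
    exact (hMV t x ht ht' hx).1.2 x y hx hxy
  · exact min_le_of_forall_pos_le_imp_le (hμ0 _) fun t ht ht' hxy =>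
      (hMV t _ ht ht' hxy).2 x y hxy

end LevelSets

theorem stmt_15_general (μ : L → ℝ) (hμ0 : ∀ x : L, 0 ≤ μ x) :
    IsEIVQFuzzyMVFilter μ ↔ (∀ t : ℝ, 0 < t → t ≤ 1/2 → ({x : L | t ≤ μ x} = ∅ ∨ IsMVFilter {x : L | t ≤ μ x})) := by
  refine ⟨fun hμ t _ ht => ?_, isEIVQFuzzyMVFilter_of_levelSets hμ0⟩
  rcases Set.eq_empty_or_nonempty {x : L | t ≤ μ x} with hempty | hne
  · exact Or.inl hempty
  · exact Or.inr (hμ.isMVFilter_levelSet ht hne)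

theorem stmt_15 (μ : L → ℝ) (hμ0 : ∀ x : L, 0 ≤ μ x) (hμ1 : ∀ x : L, μ x ≤ 1) :
    IsEIVQFuzzyMVFilter μ ↔ (∀ t : ℝ, 0 < t → t ≤ 1/2 → ({x : L | t ≤ μ x} = ∅ ∨ IsMVFilter {x : L | t ≤ μ x})) :=
  stmt_15_general μ hμ0
end
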